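/- For every integer k ≥ 2 one has 𝒢_k(θ) = 2 · k! · ζ(k+1) + O(e^{−θ}) as θ → +∞, where ζ is the Riemann zeta function; that is, θ ↦ 𝒢_k(θ) − 2·k!·ζ(k+1) is O(e^{−θ}) as θ → +∞. -/

import Mathlib

open Asymptotics Filter

/-- The function `𝒢_k(θ)` of the Landau damping analysis. -/
noncomputable def calG (k : ℕ) (θ : ℝ) : ℝ :=
  ∫ t in Set.Ioi (0:ℝ),
    Real.sinh (θ / 2) * t ^ k / (Real.sinh (t / 2) * Real.sinh ((t + θ) / 2))

/-- The real value of the Riemann zeta function at a natural argument. -/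
noncomputable def zetaRe (n : ℕ) : ℝ := (riemannZeta n).re

open Real MeasureTheory Set

/-- Key algebraic identity. -/
theorem stmt14_keyid (t θ : ℝ) (ht : 0 < t) (hθ : 0 < θ) :
    Real.sinh (θ / 2) / (Real.sinh (t / 2) * Real.sinh ((t + θ) / 2))
      = 2 / (Real.exp t - 1) - 2 / (Real.exp (t + θ) - 1) := by
  have ha1 : 1 < Real.exp (t/2) := by rw [← Real.exp_zero]; exact Real.exp_lt_exp.mpr (by linarith)
  have hb1 : 1 < Real.exp (θ/2) := by rw [← Real.exp_zero]; exact Real.exp_lt_exp.mpr (by linarith)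
  set a := Real.exp (t/2) with haa
  set b := Real.exp (θ/2) with hbb
  have ha0 : (0:ℝ) < a := by positivity
  have hb0 : (0:ℝ) < b := by positivity
  have e1 : Real.exp t = a * a := by rw [haa, ← Real.exp_add]; ring_nf
  have e2 : Real.exp (t + θ) = a * a * (b * b) := by
    rw [haa, hbb, ← Real.exp_add, ← Real.exp_add, ← Real.exp_add]; ring_nf
  have s1 : Real.sinh (t/2) = (a*a - 1)/(2*a) := by
    rw [Real.sinh_eq, haa, Real.exp_neg]; field_simp
  have s2 : Real.sinh (θ/2) = (b*b - 1)/(2*b) := by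
    rw [Real.sinh_eq, hbb, Real.exp_neg]; field_simp
  have s3 : Real.sinh ((t+θ)/2) = (a*a*(b*b) - 1)/(2*(a*b)) := by
    rw [Real.sinh_eq, Real.exp_neg, (by rw [haa, hbb, ← Real.exp_add]; ring_nf :
      Real.exp ((t+θ)/2) = a * b)]
    field_simp
  have ha2 : 1 < a * a := by nlinarith
  have hb2 : 1 < b * b := by nlinarith
  have h1 : a * a - 1 ≠ 0 := by nlinarith
  have h2 : a * a * (b * b) - 1 ≠ 0 := by nlinarith
  rw [s1, s2, s3, e1, e2]
  rw [div_sub_div _ _ h1 h2, div_eq_div_iff (by positivity) (mul_ne_zero h1 h2)]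
  field_simp
  ring

/-- The Mellin-transform evaluation of the main term. -/
theorem stmt14_value (k : ℕ) (hk : 2 ≤ k) :
    (∫ t in Set.Ioi (0:ℝ), t ^ k * (2 / (Real.exp t - 1)))
      = 2 * (Nat.factorial k) * zetaRe (k + 1) := by
  set s : ℂ := (k:ℂ) + 1 with hs_def
  have hsre : s.re = (k:ℝ) + 1 := by simp [hs_def]
  have hs : 0 < s.re := by rw [hsre]; positivity
  have hs1 : 1 < s.re := by rw [hsre]; exact_mod_cast by omega
  set F : ℝ → ℂ := fun t => ((2 / (Real.exp t - 1) : ℝ) : ℂ) with hF_def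
  have hF : ∀ t ∈ Set.Ioi (0:ℝ), HasSum (fun i : ℕ => (2:ℂ) * Real.exp (-((i:ℝ)+1) * t)) (F t) := by
    intro t ht
    have ht' : (0:ℝ) < t := ht
    have hr0 : (0:ℝ) ≤ rexp (-t) := (exp_pos _).le
    have hr1 : rexp (-t) < 1 := exp_lt_one_iff.mpr (by linarith)
    have hg := (hasSum_geometric_of_lt_one hr0 hr1).mul_left (2 * rexp (-t))
    have hfun : ∀ i : ℕ, 2 * rexp (-t) * rexp (-t) ^ i = 2 * rexp (-((i:ℝ)+1) * t) := by
      intro i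
      rw [show -((i:ℝ)+1) * t = t * -1 + (i:ℝ) * -t by ring, Real.exp_add,
        Real.exp_nat_mul]
      ring_nf
    have hval : 2 * rexp (-t) * (1 - rexp (-t))⁻¹ = 2 / (rexp t - 1) := by
      have he : rexp t ≠ 0 := (exp_pos t).ne'
      have he1 : rexp t - 1 ≠ 0 := by
        have : 1 < rexp t := by rw [← Real.exp_zero]; exact Real.exp_lt_exp.mpr ht'
        linarith
      rw [Real.exp_neg]
      rw [show (1 - (rexp t)⁻¹) = (rexp t - 1)/(rexp t) by field_simp]
      field_simp
    have hreal : HasSum (fun i : ℕ => 2 * rexp (-((i:ℝ)+1) * t)) (2 / (rexp t - 1)) := by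
      rw [← hval]
      exact hg.congr_fun fun i => (hfun i).symm
    have := (Complex.hasSum_ofReal (f := fun i : ℕ => 2 * rexp (-((i:ℝ)+1) * t))).mpr hreal
    simpa [hF_def, Complex.ofReal_mul] using this
  have h_sum : Summable fun i : ℕ => ‖(2:ℂ)‖ / ((i:ℝ)+1) ^ s.re := by
    rw [hsre]
    have h1 : Summable (fun n : ℕ => 1 / (n:ℝ) ^ ((k:ℝ)+1)) :=
      Real.summable_one_div_nat_rpow.mpr (by exact_mod_cast by omega)
    have h2 := (summable_nat_add_iff 1).mpr h1
    have h3 : Summable (fun n : ℕ => 1 / ((n:ℝ)+1) ^ ((k:ℝ)+1)) := by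
      refine h2.congr fun n => ?_
      push_cast
      ring_nf
    simpa [div_eq_mul_inv] using h3.mul_left 2
  have H := hasSum_mellin (a := fun _ : ℕ => (2:ℂ)) (p := fun i : ℕ => (i:ℝ)+1)
    (fun i => Or.inr (by positivity)) hs hF h_sum
  have hmel : mellin F s = ((∫ t in Set.Ioi (0:ℝ), t ^ k * (2 / (Real.exp t - 1)) : ℝ) : ℂ) := by
    calc mellin F s = ∫ t in Set.Ioi (0:ℝ), ((t ^ k * (2 / (Real.exp t - 1)) : ℝ) : ℂ) := by
          rw [mellin]
          refine setIntegral_congr_fun measurableSet_Ioi fun t ht => ?_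
          have hsk : s - 1 = ((k:ℕ):ℂ) := by rw [hs_def]; ring
          rw [hsk, Complex.cpow_natCast, smul_eq_mul, Complex.ofReal_mul, Complex.ofReal_pow]
      _ = _ := integral_ofReal
  have hzeta := zeta_eq_tsum_one_div_nat_add_one_cpow (s := s) hs1
  have htsum := H.tsum_eq
  rw [hmel] at htsum
  have hterm : ∀ i : ℕ, Complex.Gamma s * 2 / (((i:ℝ)+1 : ℝ) : ℂ) ^ s
      = (Complex.Gamma s * 2) * (1 / ((i:ℂ)+1) ^ s) := by
    intro i
    push_cast
    ring
  rw [tsum_congr hterm, tsum_mul_left, ← hzeta, Complex.Gamma_nat_eq_factorial] at htsum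
  rw [show ((Nat.factorial k : ℂ) * 2 : ℂ) = (((Nat.factorial k : ℝ) * 2 : ℝ) : ℂ) by
    push_cast; ring] at htsum
  have hre := congrArg Complex.re htsum
  rw [Complex.re_ofReal_mul, Complex.ofReal_re] at hre
  rw [← hre, zetaRe, show ((k+1:ℕ):ℂ) = s by rw [hs_def]; push_cast; ring]
  ring

theorem stmt14_int_pow_exp (k : ℕ) {b : ℝ} (hb : 0 < b) :
    IntegrableOn (fun t : ℝ => t ^ k * Real.exp (-b * t)) (Set.Ioi 0) := by
  have h := integrableOn_rpow_mul_exp_neg_mul_rpow (p := 1) (s := (k:ℝ)) (b := b)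
    (by exact_mod_cast lt_of_lt_of_le neg_one_lt_zero (Nat.cast_nonneg k)) one_pos hb
  simpa [Real.rpow_one, Real.rpow_natCast] using h

theorem stmt14_exp_sub_one_pos {t : ℝ} (ht : 0 < t) : 0 < Real.exp t - 1 := by
  have : 1 < Real.exp t := by rw [← Real.exp_zero]; exact Real.exp_lt_exp.mpr ht
  linarith

theorem stmt14_div_bound1 (t : ℝ) (ht : 0 < t) :
    2 / (Real.exp t - 1) ≤ 2 * Real.exp (-(2:ℝ)⁻¹ * t) / t := by
  have hden := stmt14_exp_sub_one_pos ht
  have hs : t / 2 < Real.sinh (t / 2) := Real.self_lt_sinh_iff.mpr (by linarith)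
  rw [Real.sinh_eq, Real.exp_neg] at hs
  have hc : (0:ℝ) < Real.exp (t/2) := Real.exp_pos _
  have hcc : Real.exp (t/2) * (Real.exp (t/2))⁻¹ = 1 := mul_inv_cancel₀ hc.ne'
  have e1 : Real.exp t = Real.exp (t/2) * Real.exp (t/2) := by
    rw [← Real.exp_add]; ring_nf
  have e2 : Real.exp (-(2:ℝ)⁻¹ * t) = (Real.exp (t/2))⁻¹ := by
    rw [← Real.exp_neg]; ring_nf
  rw [div_le_div_iff₀ hden ht, e1, e2]
  have hinv : (0:ℝ) < (Real.exp (t/2))⁻¹ := by positivity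
  nlinarith [hs, hcc, hc, hinv]

theorem stmt14_div_bound2 (t θ : ℝ) (ht : 0 < t) (hθ : 1 ≤ θ) :
    2 / (Real.exp (t + θ) - 1) ≤ 4 * Real.exp (-(t + θ)) := by
  have hpos : (0:ℝ) < t + θ := by linarith
  have hden := stmt14_exp_sub_one_pos hpos
  have h2 : 2 ≤ Real.exp (t + θ) := by
    have := Real.add_one_le_exp (t + θ); linarith
  have hcc : Real.exp (t+θ) * Real.exp (-(t+θ)) = 1 := by
    rw [← Real.exp_add, show t + θ + -(t+θ) = 0 by ring, Real.exp_zero]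
  have hipos : (0:ℝ) < Real.exp (-(t+θ)) := Real.exp_pos _
  rw [div_le_iff₀ hden]
  nlinarith [hcc, h2, hipos]

theorem stmt14_f2_le (k : ℕ) (t θ : ℝ) (ht : 0 < t) (hθ : 1 ≤ θ) :
    t ^ k * (2 / (Real.exp (t + θ) - 1))
      ≤ (4 * Real.exp (-θ)) * (t ^ k * Real.exp (-(1:ℝ) * t)) := by
  have h := mul_le_mul_of_nonneg_left (stmt14_div_bound2 t θ ht hθ) (pow_nonneg ht.le k)
  calc t ^ k * (2 / (Real.exp (t + θ) - 1)) ≤ t ^ k * (4 * Real.exp (-(t + θ))) := h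
    _ = (4 * Real.exp (-θ)) * (t ^ k * Real.exp (-(1:ℝ) * t)) := by
        rw [show -(t+θ) = -(1:ℝ)*t + -θ by ring, Real.exp_add]; ring

theorem stmt14_f1_integrable (k : ℕ) (hk : 1 ≤ k) :
    IntegrableOn (fun t : ℝ => t ^ k * (2 / (Real.exp t - 1))) (Set.Ioi 0) := by
  have hg : IntegrableOn (fun t : ℝ => 2 * (t ^ (k-1) * Real.exp (-(2:ℝ)⁻¹ * t)))
      (Set.Ioi 0) := (stmt14_int_pow_exp (k-1) (by norm_num)).const_mul 2
  refine hg.mono' ?_ ?_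
  · refine ContinuousOn.aestronglyMeasurable ?_ measurableSet_Ioi
    exact (continuousOn_pow k).mul (continuousOn_const.div
      ((Real.continuous_exp.continuousOn).sub continuousOn_const)
      fun t ht => (stmt14_exp_sub_one_pos ht).ne')
  · filter_upwards [ae_restrict_mem measurableSet_Ioi] with t ht
    have ht' : (0:ℝ) < t := ht
    have hnn : 0 ≤ t ^ k * (2 / (Real.exp t - 1)) :=
      mul_nonneg (pow_nonneg ht'.le k)
        (div_nonneg (by norm_num) (stmt14_exp_sub_one_pos ht').le)
    rw [Real.norm_of_nonneg hnn]
    have hpow : t ^ k = t ^ (k-1) * t := by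
      conv_lhs => rw [← Nat.sub_add_cancel hk]
      rw [pow_succ]
    calc t ^ k * (2 / (Real.exp t - 1))
        ≤ t ^ k * (2 * Real.exp (-(2:ℝ)⁻¹ * t) / t) :=
          mul_le_mul_of_nonneg_left (stmt14_div_bound1 t ht') (pow_nonneg ht'.le k)
      _ = 2 * (t ^ (k-1) * Real.exp (-(2:ℝ)⁻¹ * t)) := by
          rw [hpow]; field_simp

theorem stmt14_f2_integrable (k : ℕ) (θ : ℝ) (hθ : 1 ≤ θ) :
    IntegrableOn (fun t : ℝ => t ^ k * (2 / (Real.exp (t + θ) - 1))) (Set.Ioi 0) := by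
  have hg : IntegrableOn (fun t : ℝ => (4 * Real.exp (-θ)) * (t ^ k * Real.exp (-(1:ℝ) * t)))
      (Set.Ioi 0) := (stmt14_int_pow_exp k one_pos).const_mul _
  refine hg.mono' ?_ ?_
  · refine ContinuousOn.aestronglyMeasurable ?_ measurableSet_Ioi
    refine (continuousOn_pow k).mul (continuousOn_const.div
      (((Real.continuous_exp.comp (continuous_id.add continuous_const)).continuousOn).sub
        continuousOn_const) fun t ht => ?_)
    exact (stmt14_exp_sub_one_pos (by simp only [Set.mem_Ioi] at ht; linarith)).ne'
  · filter_upwards [ae_restrict_mem measurableSet_Ioi] with t ht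
    have ht' : (0:ℝ) < t := ht
    have hpos : (0:ℝ) < t + θ := by linarith
    have hnn : 0 ≤ t ^ k * (2 / (Real.exp (t + θ) - 1)) :=
      mul_nonneg (pow_nonneg ht'.le k)
        (div_nonneg (by norm_num) (stmt14_exp_sub_one_pos hpos).le)
    rw [Real.norm_of_nonneg hnn]
    exact stmt14_f2_le k t θ ht' hθ

/-- `𝒢_k(θ) = 2 k! ζ(k+1) + O(e^{−θ})` as `θ → +∞`, for `k ≥ 2`. -/
theorem stmt_14 (k : ℕ) (hk : 2 ≤ k) :
    (fun θ => calG k θ - 2 * (Nat.factorial k) * zetaRe (k + 1))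
      =O[atTop] fun θ : ℝ => Real.exp (-θ) := by
  have hI : IntegrableOn (fun t : ℝ => t ^ k * Real.exp (-(1:ℝ) * t)) (Set.Ioi 0) :=
    stmt14_int_pow_exp k one_pos
  set I : ℝ := ∫ t in Set.Ioi (0:ℝ), t ^ k * Real.exp (-(1:ℝ) * t) with hI_def
  have hI0 : 0 ≤ I :=
    setIntegral_nonneg measurableSet_Ioi fun t ht =>
      mul_nonneg (pow_nonneg (le_of_lt ht) k) (Real.exp_pos _).le
  rw [isBigO_iff]
  refine ⟨4 * I, ?_⟩
  filter_upwards [eventually_ge_atTop (1:ℝ)] with θ hθ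
  have hθ0 : (0:ℝ) < θ := by linarith
  have h1 := stmt14_f1_integrable k (by omega)
  have h2 := stmt14_f2_integrable k θ hθ
  have hcal : calG k θ = (∫ t in Set.Ioi (0:ℝ), t ^ k * (2 / (Real.exp t - 1)))
      - ∫ t in Set.Ioi (0:ℝ), t ^ k * (2 / (Real.exp (t + θ) - 1)) := by
    rw [calG, ← integral_sub h1 h2]
    refine setIntegral_congr_fun measurableSet_Ioi fun t ht => ?_
    have ht' : (0:ℝ) < t := ht
    have hkey := stmt14_keyid t θ ht' hθ0
    rw [show Real.sinh (θ/2) * t ^ k / (Real.sinh (t/2) * Real.sinh ((t+θ)/2))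
      = t ^ k * (Real.sinh (θ/2) / (Real.sinh (t/2) * Real.sinh ((t+θ)/2))) by ring, hkey]
    ring
  rw [hcal, stmt14_value k hk]
  rw [show (2 * (Nat.factorial k : ℝ) * zetaRe (k+1)
      - (∫ t in Set.Ioi (0:ℝ), t ^ k * (2 / (Real.exp (t + θ) - 1)))
      - 2 * (Nat.factorial k : ℝ) * zetaRe (k+1))
    = -(∫ t in Set.Ioi (0:ℝ), t ^ k * (2 / (Real.exp (t + θ) - 1))) by ring, norm_neg]
  have hf2nn : 0 ≤ ∫ t in Set.Ioi (0:ℝ), t ^ k * (2 / (Real.exp (t + θ) - 1)) := by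
    refine setIntegral_nonneg measurableSet_Ioi fun t ht => ?_
    have ht' : (0:ℝ) < t := ht
    exact mul_nonneg (pow_nonneg ht'.le k)
      (div_nonneg (by norm_num) (stmt14_exp_sub_one_pos (by linarith : (0:ℝ) < t + θ)).le)
  rw [Real.norm_of_nonneg hf2nn, Real.norm_of_nonneg (Real.exp_pos _).le]
  calc (∫ t in Set.Ioi (0:ℝ), t ^ k * (2 / (Real.exp (t + θ) - 1)))
      ≤ ∫ t in Set.Ioi (0:ℝ), (4 * Real.exp (-θ)) * (t ^ k * Real.exp (-(1:ℝ) * t)) := by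
        refine setIntegral_mono_on h2 (hI.const_mul _) measurableSet_Ioi fun t ht => ?_
        exact stmt14_f2_le k t θ ht hθ
    _ = (4 * Real.exp (-θ)) * I := by rw [integral_const_mul]
    _ = 4 * I * Real.exp (-θ) := by ring
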